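/- For u, v ∈ {0,1}^n with d = d_H(u,v) ≤ 2ε and ε/n < 1/2, the normalized intersection volume satisfies I^ε_d ≤ 2^{n(h((ε - ⌈d/2⌉)/n) - 1) + d} ≤ 2^{n(h(ε/n) - 1) + d} · ((ε/n)/(1 - ε/n))^{⌈d/2⌉}, where h is the binary entropy function. -/

import Mathlib

/-!
Every inner sum in `Iball n ε d` runs up to `min (ε - k) (ε + k - d)`, and two numbers adding up
to `2ε - d` have minimum at most `ε - ⌈d/2⌉`. Enlarging `(n - d).choose i` to `n.choose i` and
summing `d.choose k` over all `k` gives `Iball n ε d ≤ 2^(d - n) · |B(n, ε - ⌈d/2⌉)|`. A Hamming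
ball of radius `a ≤ n/2` has at most `2^(n h(a/n))` points: with `q = a/n`, each of its points
has weight at least `q^a (1-q)^(n-a) = 2^(-n h(q))` in the binomial expansion of
`(q + (1 - q))^n = 1`. The second inequality is the tangent line of the concave function `h`
at `ε/n`, evaluated at `(ε - ⌈d/2⌉)/n`.
-/

/-- Binary entropy function (base 2), with the convention `logb 2 0 = 0`. -/
noncomputable def binH (x : ℝ) : ℝ := -x * Real.logb 2 x - (1 - x) * Real.logb 2 (1 - x)

/-- Normalized volume of the intersection of two Hamming `ε`-balls in `{0,1}^n`
whose centers are at Hamming distance `d`. -/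
noncomputable def Iball (n ε d : ℕ) : ℝ :=
  (∑ k ∈ Finset.Icc (d - ε) (min ε d),
      (d.choose k : ℝ) *
        ∑ i ∈ Finset.range (min (ε - k) (ε + k - d) + 1), ((n - d).choose i : ℝ)) / 2 ^ n

open Finset Real

lemma binH_eq_binEntropy_div_log_two (x : ℝ) : binH x = binEntropy x / log 2 := by
  simp only [binH, binEntropy, logb, log_inv]
  ring

lemma ConcaveOn.le_add_mul_sub_of_hasDerivAt {S : Set ℝ} {f : ℝ → ℝ} {f' x y : ℝ}
    (hf : ConcaveOn ℝ S f) (hx : x ∈ S) (hy : y ∈ S) (hf' : HasDerivAt f f' x) :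
    f y ≤ f x + f' * (y - x) := by
  rcases lt_trichotomy y x with hyx | rfl | hxy
  · have := hf.le_slope_of_hasDerivAt hy hx hyx hf'
    rw [slope_def_field, le_div_iff₀ (sub_pos.2 hyx)] at this
    linarith
  · simp
  · have := hf.slope_le_of_hasDerivAt hx hy hxy hf'
    rw [slope_def_field, div_le_iff₀ (sub_pos.2 hxy)] at this
    linarith

lemma binH_le_binH_add_mul_logb {p q : ℝ} (hp₀ : 0 < p) (hp₁ : p < 1) (hq₀ : 0 ≤ q)
    (hq₁ : q ≤ 1) : binH q ≤ binH p + (p - q) * logb 2 (p / (1 - p)) := by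
  have tangent := strictConcave_binEntropy.concaveOn.le_add_mul_sub_of_hasDerivAt
    ⟨hp₀.le, hp₁.le⟩ ⟨hq₀, hq₁⟩ (hasDerivAt_binEntropy hp₀.ne' (by linarith))
  rw [binH_eq_binEntropy_div_log_two, binH_eq_binEntropy_div_log_two, logb,
    log_div hp₀.ne' (by linarith)]
  calc binEntropy q / log 2
      ≤ (binEntropy p + (log (1 - p) - log p) * (q - p)) / log 2 := by gcongr
    _ = _ := by ring

lemma mul_binH_sub_div_le {n x c : ℝ} (hc₀ : 0 ≤ c) (hcx : c ≤ x) (hx₀ : 0 < x) (hxn : x < n) :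
    n * binH ((x - c) / n) ≤ n * binH (x / n) + c * logb 2 ((x / n) / (1 - x / n)) := by
  have hn : 0 < n := hx₀.trans hxn
  have h := binH_le_binH_add_mul_logb (q := (x - c) / n) (by positivity)
    ((div_lt_one hn).2 hxn) (by have := sub_nonneg.2 hcx; positivity)
    ((div_le_one hn).2 (by linarith))
  have hnc : n * (x / n - (x - c) / n) = c := by field_simp; ring
  calc n * binH ((x - c) / n)
      ≤ n * (binH (x / n) + (x / n - (x - c) / n) * logb 2 ((x / n) / (1 - x / n))) := by gcongr
    _ = _ := by rw [mul_add, ← mul_assoc, hnc]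

lemma pow_mul_one_sub_pow_le_of_le {q : ℝ} (hq₀ : 0 ≤ q) (hq : q ≤ 1 - q) {i a n : ℕ}
    (hia : i ≤ a) (han : a ≤ n) : q ^ a * (1 - q) ^ (n - a) ≤ q ^ i * (1 - q) ^ (n - i) := by
  obtain ⟨j, rfl⟩ := Nat.exists_eq_add_of_le hia
  have : 0 ≤ 1 - q := hq₀.trans hq
  calc q ^ (i + j) * (1 - q) ^ (n - (i + j))
      = q ^ i * q ^ j * (1 - q) ^ (n - (i + j)) := by rw [pow_add]
    _ ≤ q ^ i * (1 - q) ^ j * (1 - q) ^ (n - (i + j)) := by gcongr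
    _ = q ^ i * (1 - q) ^ (n - i) := by rw [mul_assoc, ← pow_add]; congr 2; omega

lemma sum_range_choose_mul_pow_le_one {q : ℝ} (hq₀ : 0 ≤ q) (hq₁ : q ≤ 1) {a n : ℕ}
    (han : a ≤ n) : ∑ i ∈ range (a + 1), (n.choose i : ℝ) * (q ^ i * (1 - q) ^ (n - i)) ≤ 1 :=
  calc ∑ i ∈ range (a + 1), (n.choose i : ℝ) * (q ^ i * (1 - q) ^ (n - i))
      ≤ ∑ i ∈ range (n + 1), (n.choose i : ℝ) * (q ^ i * (1 - q) ^ (n - i)) :=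
        sum_le_sum_of_subset_of_nonneg (range_subset_range.2 (by omega)) fun i _ _ => by
          have := sub_nonneg.2 hq₁; positivity
    _ = (q + (1 - q)) ^ n := by rw [add_pow]; exact sum_congr rfl fun i _ => by ring
    _ = 1 := by simp

lemma div_pow_mul_one_sub_div_pow {a n : ℕ} (ha : 0 < a) (han : a < n) :
    ((a : ℝ) / n) ^ a * (1 - (a : ℝ) / n) ^ (n - a) = 2 ^ (-(n * binH (a / n))) := by
  have hn : (0 : ℝ) < n := by exact_mod_cast ha.trans han
  have hq₀ : (0 : ℝ) < a / n := by positivity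
  have hq₁ : 0 < 1 - (a : ℝ) / n := by
    rw [sub_pos, div_lt_one hn]; exact_mod_cast han
  have hexp : -(n * binH (a / n)) =
      a * logb 2 (a / n) + ((n - a : ℕ) : ℝ) * logb 2 (1 - a / n) := by
    rw [binH, Nat.cast_sub han.le]; field_simp; ring
  rw [hexp, rpow_add two_pos, mul_comm (a : ℝ), mul_comm ((n - a : ℕ) : ℝ),
    rpow_mul zero_le_two, rpow_mul zero_le_two, rpow_logb two_pos (by norm_num) hq₀,
    rpow_logb two_pos (by norm_num) hq₁, rpow_natCast, rpow_natCast]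

lemma sum_range_choose_le_two_rpow_mul_binH {n a : ℕ} (h : (a : ℝ) / n ≤ 1 / 2) :
    ∑ i ∈ range (a + 1), (n.choose i : ℝ) ≤ 2 ^ (n * binH (a / n)) := by
  rcases n.eq_zero_or_pos with rfl | hn
  · simp [sum_range_succ']
  rcases a.eq_zero_or_pos with rfl | ha
  · simp [binH]
  have hn' : (0 : ℝ) < n := by exact_mod_cast hn
  set q : ℝ := a / n
  have hq₀ : 0 ≤ q := by positivity
  have hq : q ≤ 1 - q := by linarith
  have han : a < n := by
    have : (0 : ℝ) < a := by exact_mod_cast ha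
    rw [div_le_iff₀ hn'] at h
    exact_mod_cast (show (a : ℝ) < n by linarith)
  have key : (∑ i ∈ range (a + 1), (n.choose i : ℝ)) * (q ^ a * (1 - q) ^ (n - a)) ≤ 1 :=
    calc (∑ i ∈ range (a + 1), (n.choose i : ℝ)) * (q ^ a * (1 - q) ^ (n - a))
        ≤ ∑ i ∈ range (a + 1), (n.choose i : ℝ) * (q ^ i * (1 - q) ^ (n - i)) := by
          rw [sum_mul]
          exact sum_le_sum fun i hi => mul_le_mul_of_nonneg_left
            (pow_mul_one_sub_pow_le_of_le hq₀ hq (Nat.lt_succ_iff.1 (mem_range.1 hi)) han.le)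
            (Nat.cast_nonneg _)
      _ ≤ 1 := sum_range_choose_mul_pow_le_one hq₀ (by linarith) han.le
  rwa [div_pow_mul_one_sub_div_pow ha han, rpow_neg zero_le_two, ← div_eq_mul_inv,
    div_le_one (by positivity)] at key

lemma Iball_le_two_pow_mul_sum_choose (n ε d : ℕ) :
    Iball n ε d ≤ 2 ^ d * (∑ i ∈ range (ε - (d + 1) / 2 + 1), (n.choose i : ℝ)) / 2 ^ n := by
  unfold Iball
  gcongr ?_ / _
  set S := ∑ i ∈ range (ε - (d + 1) / 2 + 1), (n.choose i : ℝ)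
  calc ∑ k ∈ Icc (d - ε) (min ε d),
        (d.choose k : ℝ) * ∑ i ∈ range (min (ε - k) (ε + k - d) + 1), ((n - d).choose i : ℝ)
      ≤ ∑ k ∈ Icc (d - ε) (min ε d), (d.choose k : ℝ) * S := by
        gcongr with k hk
        -- the two arguments of `min` add up to `2ε - d`
        have hk := mem_Icc.1 hk
        calc _ ≤ ∑ i ∈ range (min (ε - k) (ε + k - d) + 1), (n.choose i : ℝ) := by
              gcongr; exact Nat.sub_le n d
          _ ≤ S := sum_le_sum_of_subset_of_nonneg (range_subset_range.2 (by omega))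
              fun _ _ _ => by positivity
    _ ≤ ∑ k ∈ range (d + 1), (d.choose k : ℝ) * S :=
        sum_le_sum_of_subset_of_nonneg (fun k hk => by simp only [mem_Icc, mem_range] at *; omega)
          fun _ _ _ => by positivity
    _ = 2 ^ d * S := by rw [← sum_mul]; congr 1; exact_mod_cast Nat.sum_range_choose d

theorem intersection_entropy_upper_bounds (n ε d : ℕ) (u v : Fin n → Bool)
    (hd : hammingDist u v = d) (hd2 : d ≤ 2 * ε) (hhalf : (ε : ℝ) / n < 1/2) :
    Iball n ε d ≤
      (2 : ℝ) ^ ((n : ℝ) * (binH (((ε : ℝ) - ((d + 1) / 2 : ℕ)) / n) - 1) + d) ∧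
    (2 : ℝ) ^ ((n : ℝ) * (binH (((ε : ℝ) - ((d + 1) / 2 : ℕ)) / n) - 1) + d) ≤
      (2 : ℝ) ^ ((n : ℝ) * (binH ((ε : ℝ) / n) - 1) + d) *
        (((ε : ℝ) / n) / (1 - (ε : ℝ) / n)) ^ ((d + 1) / 2) := by
  set c := (d + 1) / 2
  have hcε : c ≤ ε := by omega
  constructor
  · have ha : ((ε - c : ℕ) : ℝ) / n ≤ 1 / 2 :=
      (div_le_div_of_nonneg_right (by exact_mod_cast Nat.sub_le ε c) n.cast_nonneg).trans hhalf.le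
    calc Iball n ε d ≤ 2 ^ d * (∑ i ∈ range (ε - c + 1), (n.choose i : ℝ)) / 2 ^ n :=
          Iball_le_two_pow_mul_sum_choose n ε d
      _ ≤ 2 ^ d * 2 ^ (n * binH ((ε - c : ℕ) / n)) / 2 ^ n := by
          gcongr; exact sum_range_choose_le_two_rpow_mul_binH ha
      _ = _ := by
          rw [← Nat.cast_sub hcε, mul_sub, mul_one, add_comm, rpow_add two_pos,
            rpow_sub two_pos, rpow_natCast, rpow_natCast]
          ring
  · rcases d.eq_zero_or_pos with rfl | hd₀
    · simp [c]
    have hn : d ≤ n := hd ▸ (hammingDist_le_card_fintype.trans_eq (Fintype.card_fin n))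
    have hn' : (0 : ℝ) < n := by exact_mod_cast hd₀.trans_le hn
    have hε : (0 : ℝ) < ε := by exact_mod_cast (show 0 < ε by omega)
    have hεn : (ε : ℝ) < n := by rw [div_lt_iff₀ hn'] at hhalf; linarith
    have hr : 0 < ((ε : ℝ) / n) / (1 - ε / n) :=
      div_pos (by positivity) (sub_pos.2 ((div_lt_one hn').2 hεn))
    calc _ ≤ (2 : ℝ) ^ (n * (binH (ε / n) - 1) + d + c * logb 2 ((ε / n) / (1 - ε / n))) := by
          apply rpow_le_rpow_of_exponent_le one_le_two
          linarith [mul_binH_sub_div_le c.cast_nonneg (by exact_mod_cast hcε) hε hεn]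
      _ = _ := by
          rw [rpow_add two_pos, mul_comm (c : ℝ), rpow_mul zero_le_two,
            rpow_logb two_pos (by norm_num) hr, rpow_natCast]
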